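/- If all honest parties hold the same input then the set C computed by the STAR protocol contains at least t+1 honest parties: let n ≥ 3t + 1, let A ⊆ V be an independent set of H with |V \ A| ≤ t (A is the set of honest parties, which form a clique in the agreement graph G, the complement of H), let M be a maximum matching of H with support N, and let T = {v ∈ V \ N : there exists an edge {x,y} ∈ M such that v is adjacent to x and v is adjacent to y in H}. Then the set C = V \ (N ∪ T) satisfies |A ∩ C| ≥ t + 1, and in particular |C| ≥ n − 2t. -/

import Mathlib

/-- A matching of a simple graph `H`: a finite set of edges of `H` that are pairwise
vertex-disjoint. -/
def IsMatching {V : Type*} (H : SimpleGraph V) (M : Finset (Sym2 V)) : Prop :=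
  (↑M : Set (Sym2 V)) ⊆ H.edgeSet ∧
    ∀ e ∈ M, ∀ e' ∈ M, e ≠ e' → ∀ v : V, v ∈ e → v ∉ e'

/-- A maximum matching: a matching such that no matching of `H` has strictly more edges. -/
def IsMaximumMatching {V : Type*} (H : SimpleGraph V) (M : Finset (Sym2 V)) : Prop :=
  IsMatching H M ∧ ∀ M' : Finset (Sym2 V), IsMatching H M' → M'.card ≤ M.card

/-- The support of a matching: the set of vertices covered by its edges. -/
def matchingSupport {V : Type*} (M : Finset (Sym2 V)) : Set V :=
  {v | ∃ e ∈ M, v ∈ e}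

/-- The set `T` of the STAR protocol: vertices uncovered by the matching `M` that are
adjacent (in `H`) to both endpoints of some edge of `M`. -/
def starT {V : Type*} (H : SimpleGraph V) (M : Finset (Sym2 V)) : Set V :=
  {v | v ∉ matchingSupport M ∧ ∃ x y : V, s(x, y) ∈ M ∧ H.Adj v x ∧ H.Adj v y}

/-- The set `C` computed by the STAR protocol: `C = V \ (N ∪ T)`. -/
def starC {V : Type*} (H : SimpleGraph V) (M : Finset (Sym2 V)) : Set V :=
  (matchingSupport M ∪ starT H M)ᶜ

/-! Charge every honest vertex of `N ∪ T` to an edge of `M`: a covered vertex to the edge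
covering it, a vertex of `T` to an edge both of whose endpoints it sees. Since `A` is independent
and `M` is maximum, each edge receives at most one honest vertex. Every edge of `M` has a dishonest
endpoint, so at most `|M| ≤ t` honest vertices lie outside `C`, leaving at least
`n - 2t ≥ t + 1` in `C`. -/

theorem Set.ncard_le_ncard_of_forall_subsingleton {α β : Type*} {s : Set α} {t : Set β}
    (r : α → β → Prop) (ht : t.Finite) (hs : ∀ a ∈ s, ∃ b ∈ t, r a b)
    (hst : ∀ b ∈ t, {a ∈ s | r a b}.Subsingleton) : s.ncard ≤ t.ncard := by
  obtain hsf | hsi := s.finite_or_infinite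
  · lift s to Finset α using hsf
    lift t to Finset β using ht
    simpa using Finset.card_le_card_of_forall_subsingleton r hs (by simpa using hst)
  · simp [hsi.ncard]

section Matching

variable {V : Type*} {H : SimpleGraph V} {M : Finset (Sym2 V)} {e : Sym2 V} {v w x y : V}
  {A : Set V}

@[simp]
theorem matchingSupport_insert [DecidableEq V] :
    matchingSupport (insert e M) = {v | v ∈ e} ∪ matchingSupport M := by
  ext v
  simp [matchingSupport]

theorem notMem_matchingSupport_erase [DecidableEq V] (hM : IsMatching H M) (he : e ∈ M)
    (hv : v ∈ e) :
    v ∉ matchingSupport (M.erase e) := by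
  rintro ⟨e', he', hve'⟩
  obtain ⟨hne, he'M⟩ := Finset.mem_erase.mp he'
  exact hM.2 e he e' he'M hne.symm v hv hve'

theorem notMem_of_notMem_matchingSupport (hv : v ∉ matchingSupport M) (hve : v ∈ e) : e ∉ M :=
  fun he ↦ hv ⟨e, he, hve⟩

theorem IsMatching.mono {M' : Finset (Sym2 V)} (hM : IsMatching H M) (h : M' ⊆ M) :
    IsMatching H M' :=
  ⟨fun _ he ↦ hM.1 (h he), fun e he e' he' ↦ hM.2 e (h he) e' (h he')⟩

theorem IsMatching.insert [DecidableEq V] (hM : IsMatching H M) (he : e ∈ H.edgeSet)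
    (hdisj : ∀ v ∈ e, v ∉ matchingSupport M) : IsMatching H (insert e M) := by
  refine ⟨by simpa [Set.insert_subset_iff] using ⟨he, hM.1⟩, ?_⟩
  simp only [Finset.mem_insert]
  rintro f (rfl | hf) f' (rfl | hf') hne v hvf hvf'
  · exact hne rfl
  · exact hdisj v hvf ⟨f', hf', hvf'⟩
  · exact hdisj v hvf' ⟨f, hf, hvf⟩
  · exact hM.2 f hf f' hf' hne v hvf hvf'

theorem IsMatching.exists_notMem (hA : H.IsIndepSet A) (hM : IsMatching H M) (he : e ∈ M) :
    ∃ u ∉ A, u ∈ e := by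
  induction e using Sym2.ind with
  | _ x y =>
    have hxy : H.Adj x y := hM.1 he
    by_contra! h
    have hx : x ∈ A := of_not_not fun hx ↦ h x hx (Sym2.mem_mk_left x y)
    have hy : y ∈ A := of_not_not fun hy ↦ h y hy (Sym2.mem_mk_right x y)
    exact hA hx hy hxy.ne hxy

theorem IsMatching.card_le_ncard_compl [Finite V] (hA : H.IsIndepSet A)
    (hM : IsMatching H M) : M.card ≤ Aᶜ.ncard := by
  rw [← Set.ncard_coe_finset]
  refine Set.ncard_le_ncard_of_forall_subsingleton (fun e u ↦ u ∈ e) (Set.toFinite _)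
    (fun e he ↦ hM.exists_notMem hA he) fun u _ e ⟨he, hue⟩ e' ⟨he', hue'⟩ ↦ ?_
  by_contra hne
  exact hM.2 e he e' he' hne u hue hue'

/-- Replacing the matched edge `xy` by `vx` and `wy` grows the matching: `v, x, y, w` is an
augmenting path. -/
theorem IsMaximumMatching.not_adj_of_notMem_matchingSupport (hM : IsMaximumMatching H M)
    (hxy : s(x, y) ∈ M) (hv : v ∉ matchingSupport M) (hw : w ∉ matchingSupport M) (hvw : v ≠ w)
    (hvx : H.Adj v x) : ¬ H.Adj w y := by
  classical
  intro hwy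
  have hx : x ∉ matchingSupport (M.erase s(x, y)) :=
    notMem_matchingSupport_erase hM.1 hxy (Sym2.mem_mk_left x y)
  have hy : y ∉ matchingSupport (M.erase s(x, y)) :=
    notMem_matchingSupport_erase hM.1 hxy (Sym2.mem_mk_right x y)
  have hxw : x ≠ w := fun h ↦ hw ⟨_, hxy, by simp [h]⟩
  have hvy : v ≠ y := fun h ↦ hv ⟨_, hxy, by simp [h]⟩
  have hsub : ∀ {u}, u ∉ matchingSupport M → u ∉ matchingSupport (M.erase s(x, y)) :=
    fun hu ⟨f, hf, huf⟩ ↦ hu ⟨f, Finset.mem_of_mem_erase hf, huf⟩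
  have hM₁ : IsMatching H (insert s(w, y) (M.erase s(x, y))) :=
    (hM.1.mono (Finset.erase_subset _ _)).insert hwy (by simp [hsub hw, hy])
  have hM₂ : IsMatching H (insert s(v, x) (insert s(w, y) (M.erase s(x, y)))) :=
    hM₁.insert hvx (by simp [hvw, hvy, hxw, (hM.1.1 hxy : H.Adj x y).ne, hsub hv, hx])
  have hcard := hM.2 _ hM₂
  rw [Finset.card_insert_of_notMem, Finset.card_insert_of_notMem, Finset.card_erase_add_one hxy]
    at hcard
  · omega
  · exact notMem_of_notMem_matchingSupport hw (Sym2.mem_mk_left w y) ∘ Finset.mem_of_mem_erase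
  · simp [hvw, hvy, notMem_of_notMem_matchingSupport hv (Sym2.mem_mk_left v x)]

def ChargedTo (H : SimpleGraph V) (M : Finset (Sym2 V)) (v : V) (e : Sym2 V) : Prop :=
  v ∈ e ∨ (v ∉ matchingSupport M ∧ ∀ u ∈ e, H.Adj v u)

theorem exists_chargedTo (hv : v ∈ matchingSupport M ∪ starT H M) :
    ∃ e ∈ M, ChargedTo H M v e := by
  rcases hv with ⟨e, he, hve⟩ | ⟨hvN, x, y, hxy, hvx, hvy⟩
  · exact ⟨e, he, .inl hve⟩
  · exact ⟨s(x, y), hxy, .inr ⟨hvN, by simp [hvx, hvy]⟩⟩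

theorem ChargedTo.adj_of_mem (hv : ChargedTo H M v e) (he : e ∈ H.edgeSet) (hw : w ∈ e)
    (hvw : v ≠ w) : H.Adj v w := by
  rcases hv with hve | ⟨-, hadj⟩
  · rw [(Sym2.mem_and_mem_iff hvw).mp ⟨hve, hw⟩] at he
    exact he
  · exact hadj w hw

theorem IsMaximumMatching.subsingleton_chargedTo (hA : H.IsIndepSet A)
    (hM : IsMaximumMatching H M) (he : e ∈ M) : {v ∈ A | ChargedTo H M v e}.Subsingleton := by
  rintro v ⟨hvA, hv⟩ w ⟨hwA, hw⟩
  by_contra hvw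
  have he' : e ∈ H.edgeSet := hM.1.1 he
  rcases hv with hve | ⟨hvN, hvadj⟩
  · exact hA hwA hvA (Ne.symm hvw) (hw.adj_of_mem he' hve (Ne.symm hvw))
  rcases hw with hwe | ⟨hwN, hwadj⟩
  · exact hA hvA hwA hvw (ChargedTo.adj_of_mem (.inr ⟨hvN, hvadj⟩) he' hwe hvw)
  induction e using Sym2.ind with
  | _ x y =>
    exact hM.not_adj_of_notMem_matchingSupport he hvN hwN hvw (hvadj x (by simp))
      (hwadj y (by simp))

theorem IsMaximumMatching.ncard_inter_le_card (hA : H.IsIndepSet A)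
    (hM : IsMaximumMatching H M) : (A ∩ (matchingSupport M ∪ starT H M)).ncard ≤ M.card := by
  rw [← Set.ncard_coe_finset]
  exact Set.ncard_le_ncard_of_forall_subsingleton (ChargedTo H M) M.finite_toSet
    (fun v hv ↦ exists_chargedTo hv.2)
    fun e he ↦ (hM.subsingleton_chargedTo hA he).anti fun v hv ↦ ⟨hv.1.1, hv.2⟩

end Matching

/-- If the honest parties `A` (an independent set of `H` of size at least `n - t`, i.e.
`|V \ A| ≤ t`, forming a clique in the agreement graph, the complement of `H`) agree with
each other and `n ≥ 3t + 1`, then the set `C = V \ (N ∪ T)` computed by the STAR protocol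
contains at least `t + 1` honest parties; in particular `|C| ≥ n - 2t`. -/
theorem star_C_contains_honest {V : Type*} [Fintype V] {n t : ℕ}
    (hn : Fintype.card V = n) (hnt : 3 * t + 1 ≤ n)
    (H : SimpleGraph V) (A : Set V)
    (hA : ∀ a ∈ A, ∀ b ∈ A, a ≠ b → ¬ H.Adj a b)
    (hAc : (Aᶜ).ncard ≤ t)
    (M : Finset (Sym2 V)) (hM : IsMaximumMatching H M) :
    t + 1 ≤ (A ∩ starC H M).ncard ∧ n - 2 * t ≤ (starC H M).ncard := by
  have hindep : H.IsIndepSet A := fun a ha b hb hab ↦ hA a ha b hb hab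
  have hcharged : (A ∩ (matchingSupport M ∪ starT H M)).ncard ≤ t :=
    (hM.ncard_inter_le_card hindep).trans ((hM.1.card_le_ncard_compl hindep).trans hAc)
  have hsplit := Set.ncard_inter_add_ncard_sdiff_eq_ncard A (matchingSupport M ∪ starT H M)
  have hcompl := Set.ncard_add_ncard_compl A
  rw [Nat.card_eq_fintype_card, hn] at hcompl
  have hhonest : n - 2 * t ≤ (A ∩ starC H M).ncard := by
    rw [starC, ← Set.sdiff_eq]
    omega
  exact ⟨by omega, hhonest.trans (Set.ncard_le_ncard Set.inter_subset_right)⟩
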